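/- arXiv:1911.09136 — 6 statements merged into one kernel-verified Lean document; each statement's English description precedes it below -/
import Mathlib

section
/- Let f_1, …, f_k : ℕ → ℕ be functions given by polynomials with integer coefficients, and for each n ∈ ℕ let S_n ⊆ ℕ be the additive submonoid generated by f_1(n), …, f_k(n). Then the set of all n ∈ ℕ for which S_n is a numerical semigroup (i.e., ℕ \ S_n is finite) is eventually periodic. -/
/-- A set `A ⊆ ℕ` is eventually periodic if there are `N` and `p ≥ 1` such that
for all `n ≥ N`, `n ∈ A ↔ n + p ∈ A`. -/
def EvPeriodicSet (A : Set ℕ) : Prop :=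
  ∃ N p : ℕ, 1 ≤ p ∧ ∀ n, N ≤ n → (n ∈ A ↔ n + p ∈ A)

/-- The additive submonoid of `ℕ` generated by `f 0 n, …, f (k-1) n`. -/
def SG (k : ℕ) (f : Fin k → ℕ → ℕ) (n : ℕ) : AddSubmonoid ℕ :=
  AddSubmonoid.closure (Set.range fun i => f i n)

/-! `S_n` is a numerical semigroup iff the values `f_i(n)` generate the unit ideal of `ℤ`, i.e.
iff `I(n) = ⊤`, where `I ⊆ ℤ[X]` is the ideal generated by the polynomials and `I(n)` is its
image under evaluation at `n`. If `I ℚ[X] = ℚ[X]`, clearing denominators puts a positive integer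
`m` into `I`, and then `I(n + m) = I(n)` since `p(n + m) ≡ p(n) mod m`. Otherwise `I ℚ[X]` is
generated by a non-unit; clearing its denominators gives `G ∈ ℤ[X]`, zero or nonconstant, and an
integer `M ≠ 0` with `M • I ⊆ (G)`. Then `I(n) = ⊤` forces `G(n) ∣ M`, which fails for
large `n` because `|G(n)| → ∞`. -/

open Polynomial Filter

theorem AddSubmonoid.finite_compl_of_mem_of_add_one_mem (S : AddSubmonoid ℕ) {x : ℕ}
    (hx : x ∈ S) (hx1 : x + 1 ∈ S) : (S : Set ℕ)ᶜ.Finite := by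
  have hmul : ∀ {u : ℕ}, u ∈ S → ∀ v : ℕ, v * u ∈ S := fun hu v => by
    simpa only [smul_eq_mul] using S.nsmul_mem hu v
  rcases x.eq_zero_or_pos with rfl | hpos
  · refine Set.finite_empty.subset fun m hm => hm ?_
    simpa using hmul hx1 m
  · refine (Set.finite_Iio (x * x)).subset fun m hm => ?_
    by_contra hge
    apply hm
    -- `m = q x + r` with `r < x ≤ q`, hence `m = (q - r) x + r (x + 1)`.
    have hr : m % x < x := Nat.mod_lt _ hpos
    have hq : x ≤ m / x := (Nat.le_div_iff_mul_le hpos).mpr (not_lt.mp hge)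
    have hm' : m = (m / x - m % x) * x + m % x * (x + 1) := by
      obtain ⟨e, he⟩ := Nat.exists_eq_add_of_le (hr.le.trans hq)
      have := Nat.div_add_mod' m x
      rw [he] at this
      rw [he, Nat.add_sub_cancel_left]
      linarith
    rw [SetLike.mem_coe, hm']
    exact S.add_mem (hmul hx _) (hmul hx1 _)

theorem finite_compl_closure_range_iff {ι : Type*} [Fintype ι] (a : ι → ℕ) :
    ((AddSubmonoid.closure (Set.range a) : Set ℕ)ᶜ).Finite ↔
      Ideal.span (Set.range fun i => (a i : ℤ)) = ⊤ := by
  set S := AddSubmonoid.closure (Set.range a)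
  set J := Ideal.span (Set.range fun i => (a i : ℤ))
  constructor
  · intro hfin
    have hSJ : ∀ s ∈ S, (s : ℤ) ∈ J := fun s hs =>
      AddSubmonoid.closure_le (S := J.toAddSubmonoid.comap (Nat.castAddMonoidHom ℤ)).mpr
        (Set.range_subset_iff.mpr fun i => Ideal.subset_span ⟨i, rfl⟩) hs
    obtain ⟨B, hB⟩ := hfin.bddAbove
    have hlarge : ∀ n, B < n → (n : ℤ) ∈ J := fun n hn =>
      hSJ n (by_contra fun h => absurd (hB h) (not_le.mpr hn))
    refine (Ideal.eq_top_iff_one J).mpr ?_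
    have := J.sub_mem (hlarge (B + 2) (by omega)) (hlarge (B + 1) (by omega))
    push_cast at this
    simpa using this
  · intro hJ
    obtain ⟨c, hc⟩ :=
      (Submodule.mem_span_range_iff_exists_fun ℤ).mp ((Ideal.eq_top_iff_one J).mp hJ)
    have hsum_mem : ∀ m : ι → ℕ, ∑ i, m i * a i ∈ S := fun m =>
      S.sum_mem fun i _ => by
        simpa only [smul_eq_mul] using S.nsmul_mem (AddSubmonoid.subset_closure ⟨i, rfl⟩) (m i)
    -- Split the Bézout coefficients into positive and negative parts.
    refine S.finite_compl_of_mem_of_add_one_mem (hsum_mem fun i => (-c i).toNat) ?_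
    convert hsum_mem fun i => (c i).toNat using 1
    have : ∑ i, ((c i).toNat * a i : ℤ) - ∑ i, ((-c i).toNat * a i : ℤ) = 1 := by
      rw [← Finset.sum_sub_distrib, ← hc]
      refine Finset.sum_congr rfl fun i _ => ?_
      rw [← sub_mul, Int.toNat_sub_toNat_neg, smul_eq_mul]
    zify
    linarith

namespace Polynomial

theorem exists_mem_map_eq_C_mul_of_mem_map {R S : Type*} [CommSemiring R] [CommSemiring S]
    [Algebra R S] (M : Submonoid R) [IsLocalization M S] {I : Ideal R[X]} {z : S[X]}
    (hz : z ∈ I.map (mapRingHom (algebraMap R S))) :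
    ∃ m ∈ M, ∃ x ∈ I, x.map (algebraMap R S) = C (algebraMap R S m) * z := by
  let := Polynomial.algebra R S
  have := Polynomial.isLocalization M S
  obtain ⟨⟨⟨x, hx⟩, ⟨_, m, hm, rfl⟩⟩, h⟩ :=
    (IsLocalization.mem_map_algebraMap_iff (M.map C) S[X]).mp hz
  exact ⟨m, hm, x, hx, by simpa [mul_comm] using h.symm⟩

theorem map_evalRingHom_le_of_sub_mem {R : Type*} [CommRing R] {I : Ideal R[X]} {a b : R}
    (h : a - b ∈ I.map (evalRingHom b)) : I.map (evalRingHom a) ≤ I.map (evalRingHom b) := by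
  refine Ideal.map_le_iff_le_comap.mpr fun x hx => ?_
  have hxb : x.eval b ∈ I.map (evalRingHom b) := Ideal.mem_map_of_mem _ hx
  simpa using Ideal.add_mem _ hxb (Ideal.mem_of_dvd _ (sub_dvd_eval_sub a b x) h)

theorem map_evalRingHom_add_eq_of_C_mem {R : Type*} [CommRing R] {I : Ideal R[X]} {c : R}
    (hc : C c ∈ I) (a : R) : I.map (evalRingHom (a + c)) = I.map (evalRingHom a) := by
  have hmem : ∀ b, c ∈ I.map (evalRingHom b) := fun b => by
    simpa using Ideal.mem_map_of_mem (evalRingHom b) hc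
  refine le_antisymm (map_evalRingHom_le_of_sub_mem ?_) (map_evalRingHom_le_of_sub_mem ?_)
  · simpa using hmem a
  · simpa using neg_mem (hmem (a + c))

local notation "toℚ[X]" => mapRingHom (algebraMap ℤ ℚ)

theorem exists_C_mul_mem_of_map_mem_map {I : Ideal ℤ[X]} {y : ℤ[X]}
    (hy : y.map (algebraMap ℤ ℚ) ∈ I.map toℚ[X]) :
    ∃ b : ℤ, b ≠ 0 ∧ C b * y ∈ I := by
  obtain ⟨b, hb, x, hx, hxb⟩ := exists_mem_map_eq_C_mul_of_mem_map (nonZeroDivisors ℤ) hy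
  have hx' : x = C b * y := map_injective _ (algebraMap ℤ ℚ).injective_int (by simpa using hxb)
  exact ⟨b, nonZeroDivisors.ne_zero hb, hx' ▸ hx⟩

theorem exists_C_natCast_mem_of_map_eq_top {I : Ideal ℤ[X]} (h : I.map toℚ[X] = ⊤) :
    ∃ m : ℕ, 0 < m ∧ C (m : ℤ) ∈ I := by
  obtain ⟨b, hb, hbI⟩ := exists_C_mul_mem_of_map_mem_map (I := I) (y := 1)
    (by rw [Polynomial.map_one, h]; exact Submodule.mem_top)
  rw [mul_one] at hbI
  refine ⟨b.natAbs, Int.natAbs_pos.mpr hb, ?_⟩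
  rw [Int.natCast_natAbs]
  exact abs_by_cases (fun t => C t ∈ I) hbI (by simpa using I.neg_mem hbI)

theorem exists_le_colon_C_of_map_le {I J : Ideal ℤ[X]} (hI : I.FG)
    (h : I.map toℚ[X] ≤ J.map toℚ[X]) : ∃ m : ℤ, m ≠ 0 ∧ I ≤ J.colon {C m} := by
  induction I, hI using Submodule.fg_induction with
  | singleton y =>
    obtain ⟨b, hb, hbJ⟩ := exists_C_mul_mem_of_map_mem_map
      (h (Ideal.mem_map_of_mem _ (Ideal.mem_span_singleton_self y)))
    refine ⟨b, hb, (Ideal.span_singleton_le_iff_mem _).mpr ?_⟩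
    rwa [Submodule.mem_colon_singleton, smul_eq_mul, mul_comm]
  | sup I₁ I₂ _ _ ih₁ ih₂ =>
    rw [Ideal.map_sup, sup_le_iff] at h
    obtain ⟨m₁, hm₁, h₁⟩ := ih₁ h.1
    obtain ⟨m₂, hm₂, h₂⟩ := ih₂ h.2
    have hmono : ∀ {m m' : ℤ}, J.colon {C m} ≤ J.colon {C (m * m')} := fun hx => by
      rw [Submodule.mem_colon_singleton, C_mul, smul_eq_mul, ← mul_assoc]
      exact J.mul_mem_right _ (Submodule.mem_colon_singleton.mp hx)
    refine ⟨m₁ * m₂, mul_ne_zero hm₁ hm₂, sup_le (h₁.trans hmono) ?_⟩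
    rw [mul_comm]
    exact h₂.trans hmono

theorem eventually_not_eval_dvd {G : ℤ[X]} (hG : G.degree ≠ 0) {M : ℤ} (hM : M ≠ 0) :
    ∀ᶠ n : ℕ in atTop, ¬ G.eval (n : ℤ) ∣ M := by
  rcases eq_or_ne G 0 with rfl | hG0
  · exact Eventually.of_forall fun n h => hM (by simpa using h)
  have hdeg : 0 < (G.map (algebraMap ℤ ℚ)).degree := by
    rw [degree_map_eq_of_injective (algebraMap ℤ ℚ).injective_int]
    exact lt_of_le_of_ne (zero_le_degree_iff.mpr hG0) hG.symm
  have htend := (abs_tendsto_atTop _ hdeg).comp tendsto_natCast_atTop_atTop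
  filter_upwards [htend.eventually_gt_atTop ((|M| : ℤ) : ℚ)] with n hn hdvd
  have hle : |G.eval (n : ℤ)| ≤ |M| :=
    Int.le_of_dvd (abs_pos.mpr hM) ((abs_dvd_abs _ _).mpr hdvd)
  have heval : (G.map (algebraMap ℤ ℚ)).eval (n : ℚ) = G.eval (n : ℤ) := by simp
  rw [Function.comp_apply, heval, ← Int.cast_abs, Int.cast_lt] at hn
  exact hle.not_gt hn

theorem eventually_map_evalRingHom_ne_top {I : Ideal ℤ[X]} (h : I.map toℚ[X] ≠ ⊤) :
    ∀ᶠ n : ℕ in atTop, I.map (evalRingHom (n : ℤ)) ≠ ⊤ := by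
  obtain ⟨g, hg⟩ := Submodule.IsPrincipal.principal (I.map toℚ[X])
  obtain ⟨b, hb, G, -, hGb⟩ := exists_mem_map_eq_C_mul_of_mem_map (nonZeroDivisors ℤ)
    (hg ▸ Submodule.mem_span_singleton_self g)
  have hb0 : algebraMap ℤ ℚ b ≠ 0 := by simpa using nonZeroDivisors.ne_zero hb
  have hIG : I.map toℚ[X] = (Ideal.span {G}).map toℚ[X] := by
    rw [Ideal.map_span, Set.image_singleton, coe_mapRingHom, hGb,
      Ideal.span_singleton_mul_left_unit (isUnit_C.mpr hb0.isUnit)]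
    exact hg
  have hGdeg : G.degree ≠ 0 := by
    rw [← degree_map_eq_of_injective (algebraMap ℤ ℚ).injective_int, hGb, degree_C_mul hb0,
      Ne, ← isUnit_iff_degree_eq_zero]
    exact fun hu => h (hg.trans (Ideal.span_singleton_eq_top.mpr hu))
  obtain ⟨M, hM, hIM⟩ := exists_le_colon_C_of_map_le (IsNoetherian.noetherian I) hIG.le
  filter_upwards [eventually_not_eval_dvd hGdeg hM] with n hn htop
  obtain ⟨x, hx, hx1⟩ := (Ideal.mem_map_iff_of_surjective _ fun a => ⟨C a, eval_C⟩).mp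
    (htop ▸ Submodule.mem_top (x := (1 : ℤ)))
  have hGx : G ∣ x * C M :=
    Ideal.mem_span_singleton.mp (Submodule.mem_colon_singleton.mp (hIM hx))
  apply hn
  simpa [show x.eval (n : ℤ) = 1 from hx1] using eval_dvd (x := (n : ℤ)) hGx

end Polynomial

theorem evPeriodicSet_setOf_map_evalRingHom_eq_top (I : Ideal ℤ[X]) :
    EvPeriodicSet {n : ℕ | I.map (evalRingHom (n : ℤ)) = ⊤} := by
  by_cases h : I.map (mapRingHom (algebraMap ℤ ℚ)) = ⊤
  · obtain ⟨m, hm, hmI⟩ := exists_C_natCast_mem_of_map_eq_top h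
    refine ⟨0, m, hm, fun n _ => ?_⟩
    simp only [Set.mem_ofPred_eq, Nat.cast_add, map_evalRingHom_add_eq_of_C_mem hmI]
  · obtain ⟨N, hN⟩ := (eventually_map_evalRingHom_ne_top h).exists_forall_of_atTop
    exact ⟨N, 1, le_rfl, fun n hn => iff_of_false (hN n hn) (hN (n + 1) (by omega))⟩

theorem stmt0_general (k : ℕ) (f : Fin k → ℕ → ℕ)
    (hf : ∀ i, ∃ p : Polynomial ℤ, ∀ n : ℕ, (f i n : ℤ) = p.eval (n : ℤ)) :
    EvPeriodicSet {n : ℕ | ((SG k f n : Set ℕ)ᶜ).Finite} := by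
  choose p hp using hf
  convert evPeriodicSet_setOf_map_evalRingHom_eq_top (Ideal.span (Set.range p)) using 3 with n
  rw [SG, finite_compl_closure_range_iff, Ideal.map_span, ← Set.range_comp]
  simp only [Function.comp_def, coe_evalRingHom, hp]

theorem stmt0 (k : ℕ) (hk : 1 ≤ k) (f : Fin k → ℕ → ℕ)
    (hf : ∀ i, ∃ p : Polynomial ℤ, ∀ n : ℕ, (f i n : ℤ) = p.eval (n : ℤ)) :
    EvPeriodicSet {n : ℕ | ((SG k f n : Set ℕ)ᶜ).Finite} :=
  stmt0_general k f hf
end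

section
/- Let f_1, …, f_k : ℕ → ℕ be functions given by polynomials with integer coefficients. Then the function sending n to gcd(f_1(n), …, f_k(n)) is eventually quasi-polynomial. -/
open Polynomial Filter

lemma evsign (q : Polynomial ℤ) :
    ∃ N : ℕ, (∀ n : ℕ, N ≤ n → 0 ≤ q.eval (n : ℤ)) ∨ (∀ n : ℕ, N ≤ n → q.eval (n : ℤ) ≤ 0) := by
  suffices h : ∀ r : Polynomial ℤ, 0 ≤ r.leadingCoeff →
      ∃ N : ℕ, ∀ n : ℕ, N ≤ n → 0 ≤ r.eval (n : ℤ) by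
    rcases le_total 0 q.leadingCoeff with h1 | h1
    · obtain ⟨N, hN⟩ := h q h1
      exact ⟨N, Or.inl hN⟩
    · obtain ⟨N, hN⟩ := h (-q) (by simpa using h1)
      refine ⟨N, Or.inr fun n hn => ?_⟩
      have := hN n hn
      simp only [eval_neg] at this
      omega
  intro r hr
  by_cases hd : 0 < r.degree
  · set Q : Polynomial ℝ := r.map (Int.castRingHom ℝ) with hQ
    have hinj : Function.Injective (Int.castRingHom ℝ) := Int.cast_injective
    have hQdeg : 0 < Q.degree := by
      rwa [degree_map_eq_of_injective hinj]
    have hlc : 0 ≤ Q.leadingCoeff := by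
      rw [leadingCoeff_map_of_injective hinj]
      have : ((Int.castRingHom ℝ)) r.leadingCoeff = (r.leadingCoeff : ℝ) := rfl
      rw [this]
      exact_mod_cast hr
    have ht : Tendsto (fun n : ℕ => Q.eval ((n : ℕ) : ℝ)) atTop atTop :=
      (Q.tendsto_atTop_of_leadingCoeff_nonneg hQdeg hlc).comp tendsto_natCast_atTop_atTop
    obtain ⟨N, hN⟩ := eventually_atTop.mp (ht.eventually_ge_atTop 0)
    refine ⟨N, fun n hn => ?_⟩
    have h1 : (0 : ℝ) ≤ Q.eval ((n : ℕ) : ℝ) := hN n hn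
    have h2 : Q.eval ((n : ℕ) : ℝ) = ((r.eval (n : ℤ) : ℤ) : ℝ) := by
      have hcast : ((n : ℕ) : ℝ) = (Int.castRingHom ℝ) ((n : ℕ) : ℤ) := by push_cast; rfl
      rw [hcast, hQ, eval_map, eval₂_hom]
      rfl
    rw [h2] at h1
    exact_mod_cast h1
  · refine ⟨0, fun n _ => ?_⟩
    rw [eq_C_of_degree_le_zero (le_of_not_gt hd), eval_C]
    have hnd : r.natDegree = 0 := natDegree_eq_zero_iff_degree_le_zero.mpr (le_of_not_gt hd)
    rw [Polynomial.leadingCoeff, hnd] at hr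
    exact hr

lemma key_split (k : ℕ) (hk : 1 ≤ k) (p : Fin k → Polynomial ℤ) :
    ∃ (g : Polynomial ℤ) (h : Fin k → Polynomial ℤ) (R : ℤ) (a : Fin k → Polynomial ℤ),
      R ≠ 0 ∧ (∀ i, p i = g * h i) ∧ ∑ i, a i * h i = Polynomial.C R := by
  haveI : NeZero k := ⟨by omega⟩
  letI : NormalizationMonoid (Polynomial ℤ) := UniqueFactorizationMonoid.normalizationMonoid.toNormalizationMonoid
  letI : NormalizedGCDMonoid (Polynomial ℤ) := UniqueFactorizationMonoid.toNormalizedGCDMonoid _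
  have hne : (Finset.univ : Finset (Fin k)).Nonempty := Finset.univ_nonempty
  obtain ⟨h, hph, hgcd⟩ := Finset.extract_gcd p hne
  have hex : ∃ i : Fin k, h i ≠ 0 := by
    by_contra hall
    push_neg at hall
    have : Finset.univ.gcd h = 0 := Finset.gcd_eq_zero_iff.mpr fun i _ => hall i
    rw [hgcd] at this
    exact one_ne_zero this
  obtain ⟨i0, hi0⟩ := hex
  set φ : Polynomial ℤ →+* Polynomial ℚ := Polynomial.mapRingHom (Int.castRingHom ℚ) with hφ
  have hφinj : Function.Injective φ := Polynomial.map_injective _ Int.cast_injective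
  set H : Fin k → Polynomial ℚ := fun i => φ (h i) with hH
  have hspan : Ideal.span (Set.range H) = ⊤ := by
    set I : Ideal (Polynomial ℚ) := Ideal.span (Set.range H) with hI
    set q : Polynomial ℚ := Submodule.IsPrincipal.generator I with hq
    have hgen : Ideal.span {q} = I := Submodule.IsPrincipal.span_singleton_generator I
    have hdvd : ∀ i, q ∣ H i := by
      intro i
      have : H i ∈ I := Ideal.subset_span (Set.mem_range_self i)
      rw [← hgen] at this
      exact (Ideal.mem_span_singleton).mp this
    have hqne : q ≠ 0 := by
      intro h0
      have := hdvd i0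
      rw [h0, zero_dvd_iff] at this
      exact hi0 (hφinj (by simpa using this))
    obtain ⟨b, hb⟩ := IsLocalization.integerNormalization_map_to_map (nonZeroDivisors ℤ)
      (R := ℤ) (S := ℚ) q
    rw [algebraMap_int_eq] at hb
    set q' : Polynomial ℤ := IsLocalization.integerNormalization (nonZeroDivisors ℤ) q with hq'
    have hbne : (b : ℤ) ≠ 0 := nonZeroDivisors.coe_ne_zero b
    have hq'map : φ q' = Polynomial.C ((b : ℤ) : ℚ) * q := by
      rw [hφ]
      simp only [Polynomial.coe_mapRingHom]
      rw [hb]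
      ext j
      simp [Polynomial.coeff_smul, zsmul_eq_mul, Polynomial.coeff_C_mul]
    have hq'ne : q' ≠ 0 := by
      intro h0
      rw [h0, map_zero] at hq'map
      have hC : Polynomial.C ((b : ℤ) : ℚ) ≠ 0 :=
        Polynomial.C_ne_zero.mpr (by exact_mod_cast hbne)
      rcases mul_eq_zero.mp hq'map.symm with hc | hc
      · exact hC hc
      · exact hqne hc
    set Q : Polynomial ℤ := q'.primPart with hQdef
    have hQprim : Q.IsPrimitive := q'.isPrimitive_primPart
    have hcne : (q'.content : ℚ) ≠ 0 := by
      exact_mod_cast fun hc => hq'ne (Polynomial.content_eq_zero_iff.mp (by exact_mod_cast hc))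
    have h1 : φ q' = Polynomial.C (q'.content : ℚ) * φ Q := by
      conv_lhs => rw [q'.eq_C_content_mul_primPart]
      rw [map_mul, hφ]
      simp [Polynomial.coe_mapRingHom, Polynomial.map_C]
      exact Or.inl rfl
    have hQq : φ Q = Polynomial.C (((b : ℤ) : ℚ) / (q'.content : ℚ)) * q := by
      have h2 : Polynomial.C (q'.content : ℚ) * φ Q = Polynomial.C ((b : ℤ) : ℚ) * q := by
        rw [← h1, hq'map]
      have h3 := congrArg (fun x => Polynomial.C ((q'.content : ℚ))⁻¹ * x) h2
      simp only [← mul_assoc, ← Polynomial.C_mul] at h3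
      rw [inv_mul_cancel₀ hcne, Polynomial.C_1, one_mul] at h3
      rw [h3]
      congr 2
      field_simp
    have hu : (((b : ℤ) : ℚ) / (q'.content : ℚ)) ≠ 0 :=
      div_ne_zero (by exact_mod_cast hbne) hcne
    have hQdvd : ∀ i, Q ∣ h i := by
      intro i
      by_cases hzi : h i = 0
      · simp [hzi]
      have hφQdvd : φ Q ∣ φ ((h i).primPart) := by
        have hd1 : φ Q ∣ H i := by
          rw [hQq]
          exact ((isUnit_C.mpr hu.isUnit).mul_left_dvd).mpr (hdvd i)
        have hd2 : H i = Polynomial.C (((h i).content : ℤ) : ℚ) * φ ((h i).primPart) := by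
          show φ (h i) = _
          conv_lhs => rw [(h i).eq_C_content_mul_primPart]
          rw [map_mul, hφ]
          simp [Polynomial.coe_mapRingHom, Polynomial.map_C]
        rw [hd2] at hd1
        have hcu : IsUnit (Polynomial.C (((h i).content : ℤ) : ℚ)) := by
          apply isUnit_C.mpr
          apply isUnit_iff_ne_zero.mpr
          exact_mod_cast fun hc => hzi (Polynomial.content_eq_zero_iff.mp (by exact_mod_cast hc))
        exact (hcu.dvd_mul_left).mp hd1
      have := (Polynomial.IsPrimitive.Int.dvd_iff_map_cast_dvd_map_cast Q ((h i).primPart)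
        hQprim).mpr
        (by simpa [hφ, Polynomial.coe_mapRingHom] using hφQdvd)
      exact this.trans ((h i).primPart_dvd)
    have hQunit : IsUnit Q := by
      have : Q ∣ Finset.univ.gcd h := Finset.dvd_gcd fun i _ => hQdvd i
      rw [hgcd] at this
      exact isUnit_of_dvd_one this
    have hqunit : IsUnit q := by
      have h1 : IsUnit (φ Q) := hQunit.map φ
      rw [hQq] at h1
      exact isUnit_of_mul_isUnit_right h1
    rw [← hgen]
    exact Ideal.span_singleton_eq_top.mpr hqunit
  have hone : (1 : Polynomial ℚ) ∈ Ideal.span (Set.range H) := by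
    rw [hspan]; trivial
  obtain ⟨b, hbsum⟩ := (Submodule.mem_span_range_iff_exists_fun (Polynomial ℚ)).mp hone
  have hclear : ∀ i : Fin k, ∃ (d : ℤ) (B : Polynomial ℤ), d ≠ 0 ∧
      φ B = Polynomial.C ((d : ℚ)) * b i := by
    intro i
    obtain ⟨d, hd⟩ := IsLocalization.integerNormalization_map_to_map (nonZeroDivisors ℤ)
      (R := ℤ) (S := ℚ) (b i)
    rw [algebraMap_int_eq] at hd
    refine ⟨(d : ℤ), IsLocalization.integerNormalization (nonZeroDivisors ℤ) (b i),
      nonZeroDivisors.coe_ne_zero d, ?_⟩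
    rw [hφ]
    simp only [Polynomial.coe_mapRingHom]
    rw [hd]
    ext j
    simp [Polynomial.coeff_smul, zsmul_eq_mul, Polynomial.coeff_C_mul]
  choose dd B hdd hB using hclear
  have hDne : (∏ i, dd i) ≠ 0 := Finset.prod_ne_zero_iff.mpr fun i _ => hdd i
  refine ⟨Finset.univ.gcd p, h, ∏ i, dd i,
    fun i => Polynomial.C (∏ j ∈ Finset.univ.erase i, dd j) * B i,
    hDne, fun i => hph i (Finset.mem_univ i), ?_⟩
  apply hφinj
  rw [map_sum]
  have key : ∀ i : Fin k, φ (Polynomial.C (∏ j ∈ Finset.univ.erase i, dd j) * B i * h i)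
      = Polynomial.C (((∏ i, dd i : ℤ) : ℚ)) * (b i * H i) := by
    intro i
    rw [map_mul, map_mul, hB]
    have hCmap : φ (Polynomial.C (∏ j ∈ Finset.univ.erase i, dd j))
        = Polynomial.C (((∏ j ∈ Finset.univ.erase i, dd j) : ℤ) : ℚ) := by
      simp [hφ, Polynomial.map_C]
    rw [hCmap]
    have hprod : (((∏ j ∈ Finset.univ.erase i, dd j) : ℤ) : ℚ) * ((dd i : ℤ) : ℚ)
        = ((∏ i, dd i : ℤ) : ℚ) := by
      push_cast
      exact Finset.prod_erase_mul _ _ (Finset.mem_univ i)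
    simp only [hH]
    rw [← hprod, Polynomial.C_mul]
    ring
  calc ∑ i, φ (Polynomial.C (∏ j ∈ Finset.univ.erase i, dd j) * B i * h i)
      = ∑ i, Polynomial.C (((∏ i, dd i : ℤ) : ℚ)) * (b i * H i) :=
        Finset.sum_congr rfl fun i _ => key i
    _ = Polynomial.C (((∏ i, dd i : ℤ) : ℚ)) * ∑ i, b i * H i := by rw [Finset.mul_sum]
    _ = φ (Polynomial.C (∏ i, dd i)) := by
        have hsum1 : ∑ i, b i * H i = 1 := by
          simpa [smul_eq_mul] using hbsum
        rw [hsum1, mul_one, hφ]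
        simp [Polynomial.map_C]

/-- A function `c : ℕ → ℚ` is eventually periodic if there are `N` and `p ≥ 1`
with `c (n + p) = c n` for all `n ≥ N`. -/
def EvPeriodic (c : ℕ → ℚ) : Prop :=
  ∃ N p : ℕ, 1 ≤ p ∧ ∀ n, N ≤ n → c (n + p) = c n

/-- A function `g : ℕ → ℤ` is eventually quasi-polynomial if
`g n = Σ_{i=0}^d c_i(n)·n^i` for eventually periodic `c_0, …, c_d : ℕ → ℚ`. -/
def IsEQP (g : ℕ → ℤ) : Prop :=
  ∃ (d : ℕ) (c : ℕ → ℕ → ℚ), (∀ i, i ≤ d → EvPeriodic (c i)) ∧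
    ∀ n : ℕ, (g n : ℚ) = ∑ i ∈ Finset.range (d + 1), c i n * (n : ℚ) ^ i

theorem stmt1 (k : ℕ) (hk : 1 ≤ k) (f : Fin k → ℕ → ℕ)
    (hf : ∀ i, ∃ p : Polynomial ℤ, ∀ n : ℕ, (f i n : ℤ) = p.eval (n : ℤ)) :
    IsEQP (fun n => ((Finset.univ.gcd fun i : Fin k => f i n : ℕ) : ℤ)) := by
  choose p hp using hf
  obtain ⟨g, h, R, a, hR, hsplit, hbez⟩ := key_split k hk p
  by_cases hg0 : g = 0
  · refine ⟨0, fun _ _ => 0, fun i _ => ⟨0, 1, le_refl 1, fun n _ => rfl⟩, fun n => ?_⟩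
    have hzero : ∀ i, f i n = 0 := by
      intro i
      have h1 := hp i n
      rw [hsplit i, hg0, zero_mul, eval_zero] at h1
      exact_mod_cast h1
    have : Finset.univ.gcd (fun i : Fin k => f i n) = 0 :=
      Finset.gcd_eq_zero_iff.mpr fun i _ => hzero i
    simp [this]
  · set m : ℕ := R.natAbs with hm
    have hm1 : 1 ≤ m := Int.natAbs_pos.mpr hR
    set e : ℕ → ℕ := fun n => Finset.univ.gcd (fun i : Fin k => ((h i).eval (n : ℤ)).natAbs)
      with he
    have hedvd_eval : ∀ (n : ℕ) (i : Fin k), (e n : ℤ) ∣ (h i).eval (n : ℤ) := by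
      intro n i
      have h1 : e n ∣ ((h i).eval (n : ℤ)).natAbs := Finset.gcd_dvd (Finset.mem_univ i)
      exact (Int.natCast_dvd_natCast.mpr h1).trans (Int.natAbs_dvd.mpr dvd_rfl)
    have hem : ∀ n, e n ∣ m := by
      intro n
      have h2 : (e n : ℤ) ∣ R := by
        have h3 : (e n : ℤ) ∣ (∑ i, a i * h i).eval (n : ℤ) := by
          rw [Polynomial.eval_finset_sum]
          exact Finset.dvd_sum fun i _ => by
            rw [eval_mul]; exact Dvd.dvd.mul_left (hedvd_eval n i) _
        rwa [hbez, eval_C] at h3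
      exact Int.natCast_dvd_natCast.mp (Int.dvd_natAbs.mpr h2)
    have step : ∀ n1 n2 : ℕ, ((m : ℤ) ∣ (n2 : ℤ) - (n1 : ℤ)) → e n1 ∣ e n2 := by
      intro n1 n2 hdm
      apply Finset.dvd_gcd
      intro i _
      have hdiff : (m : ℤ) ∣ (h i).eval (n2 : ℤ) - (h i).eval (n1 : ℤ) :=
        hdm.trans (Polynomial.sub_dvd_eval_sub (n2 : ℤ) (n1 : ℤ) (h i))
      have h1 : (e n1 : ℤ) ∣ (h i).eval (n2 : ℤ) := by
        have hdm' : (e n1 : ℤ) ∣ (m : ℤ) := Int.natCast_dvd_natCast.mpr (hem n1)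
        have := dvd_add (hdm'.trans hdiff) (hedvd_eval n1 i)
        simpa using this
      exact Int.natCast_dvd_natCast.mp (Int.dvd_natAbs.mpr h1)
    have heper : ∀ n, e (n + m) = e n := by
      intro n
      refine Nat.dvd_antisymm (step (n + m) n ?_) (step n (n + m) ?_)
      · exact ⟨-1, by push_cast; ring⟩
      · exact ⟨1, by push_cast; ring⟩
    -- factorization of the gcd
    have hFn : ∀ n : ℕ, Finset.univ.gcd (fun i : Fin k => f i n)
        = (g.eval (n : ℤ)).natAbs * e n := by
      intro n
      have hfi : ∀ i : Fin k,
          f i n = (g.eval (n : ℤ)).natAbs * ((h i).eval (n : ℤ)).natAbs := by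
        intro i
        have h1 : (f i n : ℤ) = (p i).eval (n : ℤ) := hp i n
        have h2 : (p i).eval (n : ℤ) = g.eval (n : ℤ) * (h i).eval (n : ℤ) := by
          rw [hsplit i, eval_mul]
        have h3 : f i n = (g.eval (n : ℤ) * (h i).eval (n : ℤ)).natAbs := by
          rw [← h2, ← h1]
          exact (Int.natAbs_natCast (f i n)).symm
        rw [h3, Int.natAbs_mul]
      calc Finset.univ.gcd (fun i : Fin k => f i n)
          = Finset.univ.gcd
            (fun i : Fin k => (g.eval (n : ℤ)).natAbs * ((h i).eval (n : ℤ)).natAbs) := by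
            congr 1; ext i; exact hfi i
        _ = normalize ((g.eval (n : ℤ)).natAbs) * e n := Finset.gcd_mul_left
        _ = (g.eval (n : ℤ)).natAbs * e n := by rw [normalize_eq]
    -- eventual sign
    obtain ⟨N, hsign⟩ := evsign g
    have hsgn : ∃ ε : ℚ, ∀ n : ℕ, N ≤ n →
        (((g.eval (n : ℤ)).natAbs : ℚ)) = ε * ((g.eval (n : ℤ) : ℤ) : ℚ) := by
      rcases hsign with hpos | hneg
      · refine ⟨1, fun n hn => ?_⟩
        rw [one_mul, Nat.cast_natAbs, abs_of_nonneg (hpos n hn)]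
      · refine ⟨-1, fun n hn => ?_⟩
        rw [Nat.cast_natAbs, abs_of_nonpos (hneg n hn)]
        push_cast; ring
    obtain ⟨ε, hε⟩ := hsgn
    set d : ℕ := g.natDegree with hd
    set T : ℕ → ℚ := fun n =>
      ∑ i ∈ Finset.range d, (e n : ℚ) * ε * (g.coeff (i + 1) : ℚ) * (n : ℚ) ^ (i + 1) with hT
    set c : ℕ → ℕ → ℚ := fun j n =>
      if j = 0 then ((Finset.univ.gcd fun i : Fin k => f i n : ℕ) : ℚ) - T n
      else (e n : ℚ) * ε * (g.coeff j : ℚ) with hc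
    have hc0 : ∀ n : ℕ, N ≤ n → c 0 n = (e n : ℚ) * ε * (g.coeff 0 : ℚ) := by
      intro n hn
      have hFcast : ((Finset.univ.gcd fun i : Fin k => f i n : ℕ) : ℚ)
          = ε * ((g.eval (n : ℤ) : ℤ) : ℚ) * (e n : ℚ) := by
        rw [hFn n]
        push_cast
        rw [hε n hn]
      have hsum : ∑ i ∈ Finset.range d, (g.coeff (i + 1) : ℚ) * (n : ℚ) ^ (i + 1)
          = ((g.eval (n : ℤ) : ℤ) : ℚ) - (g.coeff 0 : ℚ) := by
        have h1 : g.eval (n : ℤ)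
            = ∑ i ∈ Finset.range (d + 1), g.coeff i * (n : ℤ) ^ i := eval_eq_sum_range _
        have h2 : ((g.eval (n : ℤ) : ℤ) : ℚ)
            = ∑ i ∈ Finset.range (d + 1), (g.coeff i : ℚ) * (n : ℚ) ^ i := by
          rw [h1]; push_cast; ring
        rw [h2, Finset.sum_range_succ']
        push_cast
        ring
      have hTval : T n = (e n : ℚ) * ε * (((g.eval (n : ℤ) : ℤ) : ℚ) - (g.coeff 0 : ℚ)) := by
        rw [hT, ← hsum, Finset.mul_sum]
        apply Finset.sum_congr rfl
        intro i _
        ring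
      simp only [hc, if_pos rfl]
      rw [hFcast, hTval]
      ring
    refine ⟨d, c, ?_, ?_⟩
    · intro j hj
      by_cases hj0 : j = 0
      · subst hj0
        refine ⟨N, m, hm1, fun n hn => ?_⟩
        rw [hc0 n hn, hc0 (n + m) (le_trans hn (Nat.le_add_right n m)), heper n]
      · refine ⟨0, m, hm1, fun n _ => ?_⟩
        simp only [hc, if_neg hj0]
        rw [heper n]
    · intro n
      rw [Finset.sum_range_succ']
      have hplus : ∀ i ∈ Finset.range d, c (i + 1) n * (n : ℚ) ^ (i + 1)
          = (e n : ℚ) * ε * (g.coeff (i + 1) : ℚ) * (n : ℚ) ^ (i + 1) := by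
        intro i _
        simp only [hc, if_neg (Nat.succ_ne_zero i)]
      rw [Finset.sum_congr rfl hplus]
      simp only [hc, if_pos rfl, pow_zero, mul_one, hT]
      push_cast
      ring
end

section
/- Fix an even integer d ≥ 2 and set a_1(n) = 4n^d − 2n^{d/2}, a_2(n) = 4n^d − 1, a_3(n) = 4n^d + 2n^{d/2}, a_4(n) = 4n^d + 4n^{d/2} − 1. For each n ≥ 1, let π_n : ℕ^4 → ℕ be the additive monoid homomorphism (z_1, z_2, z_3, z_4) ↦ Σ_i z_i·a_i(n), and let ker(π_n) = {(z, z') : π_n(z) = π_n(z')}. Then every set R ⊆ ℕ^4 × ℕ^4 whose generated additive congruence equals ker(π_n) has cardinality at least 2n^{d/2}; equivalently, the first Betti number β_1(K[S_n]) of the semigroup algebra of S_n = ⟨a_1(n), a_2(n), a_3(n), a_4(n)⟩ is at least 2n^{d/2}. -/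
open Relation

section ChainMachinery
variable {M : Type*} [AddCommMonoid M]

/-- One elementary rewriting step generated by a set of relations. -/
def BStep (r : M → M → Prop) (x y : M) : Prop :=
  ∃ u s t, (r s t ∨ r t s) ∧ x = u + s ∧ y = u + t

/-- The chain closure of elementary steps is an additive congruence. -/
def chainCon (r : M → M → Prop) : AddCon M where
  r := ReflTransGen (BStep r)
  iseqv := by
    refine ⟨fun _ => .refl, fun {x y} h => ?_, fun h1 h2 => h1.trans h2⟩
    have hs : Symmetric (BStep r) := by
      rintro a b ⟨u, s, t, h, rfl, rfl⟩
      exact ⟨u, t, s, h.symm, rfl, rfl⟩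
    haveI : Std.Symm (BStep r) := ⟨fun _ _ h => hs h⟩
    exact (ReflTransGen.symmetric (r := BStep r)).symm _ _ h
  add' := by
    intro w x y z h1 h2
    have key : ∀ (c : M) {a b : M}, ReflTransGen (BStep r) a b →
        ReflTransGen (BStep r) (a + c) (b + c) := by
      intro c a b h
      refine ReflTransGen.lift (fun z => z + c) ?_ _ _ h
      rintro p q ⟨u, s, t, hst, rfl, rfl⟩
      exact ⟨u + c, s, t, hst, by rw [add_right_comm], by rw [add_right_comm]⟩
    have h1' := key y h1
    have h2' := key x h2
    rw [add_comm y x, add_comm z x] at h2'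
    exact h1'.trans h2'

theorem addConGen_chain {r : M → M → Prop} {x y : M} (h : addConGen r x y) :
    ReflTransGen (BStep r) x y := by
  refine (AddCon.addConGen_le (c := chainCon r)).mpr ?_ h
  intro a b hab
  exact ReflTransGen.single ⟨0, a, b, Or.inl hab, (zero_add a).symm, (zero_add b).symm⟩
end ChainMachinery

theorem key_pair {R : Finset ((Fin 4 → ℕ) × (Fin 4 → ℕ))} {π : (Fin 4 → ℕ) → ℕ}
    (hπadd : ∀ x y, π (x + y) = π x + π y)
    (hker : ∀ p ∈ R, π p.1 = π p.2)
    {α β : Fin 4 → ℕ} (hne : α ≠ β) (hdisj : ∀ i, α i = 0 ∨ β i = 0)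
    (huniq : ∀ z, π z = π α → z = α ∨ z = β)
    (hchain : ReflTransGen (BStep (fun x y => (x, y) ∈ R)) α β) :
    (α, β) ∈ R ∨ (β, α) ∈ R := by
  suffices H : ∀ y, ReflTransGen (BStep (fun x y => (x, y) ∈ R)) α y →
      y = α ∨ ((α, β) ∈ R ∨ (β, α) ∈ R) by
    rcases H β hchain with h | h
    · exact absurd h.symm hne
    · exact h
  intro y h
  induction h with
  | refl => exact Or.inl rfl
  | @tail b c h1 h2 ih =>
    rcases ih with hb | hfound
    · rw [hb] at h2
      obtain ⟨u, s, t, hst, he1, he2⟩ := h2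
      have hπst : π s = π t := by
        rcases hst with h | h
        · exact hker (s, t) h
        · exact (hker (t, s) h).symm
      have hπc : π c = π α := by rw [he1, he2, hπadd, hπadd, hπst]
      rcases huniq c hπc with hc | hc
      · exact Or.inl hc
      · right
        have hu : u = 0 := by
          funext i
          show u i = 0
          have e1 : α i = u i + s i := by rw [he1]; rfl
          have e2 : c i = u i + t i := by rw [he2]; rfl
          rcases hdisj i with h0 | h0
          · omega
          · rw [hc] at e2; omega
        subst hu
        rw [zero_add] at he1 he2
        have hs : s = α := he1.symm
        have ht : t = β := by rw [← he2, hc]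
        rcases hst with h | h
        · exact Or.inl (by rwa [hs, ht] at h)
        · exact Or.inr (by rwa [hs, ht] at h)
    · exact Or.inr hfound

theorem uniq0' (q X Y U V : ℤ) (hq : 2 ≤ q) (hX : 0 ≤ X) (hY : 0 ≤ Y) (hU : 0 ≤ U) (hV : 0 ≤ V)
    (hE : X*(4*q^2-2*q) + Y*(4*q^2-1) + U*(4*q^2+2*q) + V*(4*q^2+4*q-1) = 8*q^2+2*q-1) :
    (X=0 ∧ Y=1 ∧ U=1 ∧ V=0) ∨ (X=1 ∧ Y=0 ∧ U=0 ∧ V=1) := by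
  have hq2 : (2:ℤ)*q ≤ q^2 := by nlinarith
  have hub : X + Y + U + V ≤ 2 := by
    by_contra h
    push_neg at h
    nlinarith [mul_nonneg (show (0:ℤ) ≤ X+Y+U+V-3 by linarith) (show (0:ℤ) ≤ 4*q^2-2*q by nlinarith),
      mul_nonneg hY (show (0:ℤ) ≤ 2*q-1 by linarith),
      mul_nonneg hU (show (0:ℤ) ≤ 4*q by linarith),
      mul_nonneg hV (show (0:ℤ) ≤ 6*q-1 by linarith)]
  have hlb : 2 ≤ X + Y + U + V := by
    by_contra h
    push_neg at h
    nlinarith [mul_nonneg (show (0:ℤ) ≤ 1-(X+Y+U+V) by linarith) (show (0:ℤ) ≤ 4*q^2+4*q-1 by nlinarith),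
      mul_nonneg hX (show (0:ℤ) ≤ 6*q-1 by linarith),
      mul_nonneg hY (show (0:ℤ) ≤ 4*q by linarith),
      mul_nonneg hU (show (0:ℤ) ≤ 2*q-1 by linarith)]
  have hX2 : X ≤ 2 := by linarith
  have hY2 : Y ≤ 2 := by linarith
  have hU2 : U ≤ 2 := by linarith
  have hV2 : V ≤ 2 := by linarith
  interval_cases X <;> interval_cases Y <;> interval_cases U <;> interval_cases V <;>
    simp_all <;> linarith

theorem uniqk' (q k X Y U V : ℤ) (hq : 2 ≤ q) (hk1 : 1 ≤ k) (hk2 : k ≤ 2*q-1)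
    (hX : 0 ≤ X) (hY : 0 ≤ Y) (hU : 0 ≤ U) (hV : 0 ≤ V)
    (hE : X*(4*q^2-2*q) + Y*(4*q^2-1) + U*(4*q^2+2*q) + V*(4*q^2+4*q-1)
      = (2*q-1)*(4*q^2+2*q+k)) :
    (X=0 ∧ Y=0 ∧ U=2*q-1-k ∧ V=k) ∨ (X=2*q+1-k ∧ Y=k ∧ U=0 ∧ V=0) := by
  have hq0 : (0:ℤ) < 2*q-1 := by linarith
  have h2 : (2*q-1) ∣ 2*(U+V) :=
    ⟨(4*q^2+2*q+k) - 2*q*X - (2*q+1)*Y - (2*q+2)*U - (2*q+3)*V, by linear_combination hE⟩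
  have hdvd : (2*q-1) ∣ (U+V) := by
    have h3 := dvd_sub (dvd_mul_right (2*q-1) (U+V)) (h2.mul_left (q-1))
    have h4 : (2*q-1)*(U+V) - (q-1)*(2*(U+V)) = U+V := by ring
    rwa [h4] at h3
  have hub : (U+V)*(4*q^2+2*q) ≤ (2*q-1)*(4*q^2+4*q-1) := by
    nlinarith [mul_nonneg hX (show (0:ℤ) ≤ 4*q^2-2*q by nlinarith),
      mul_nonneg hY (show (0:ℤ) ≤ 4*q^2-1 by nlinarith),
      mul_nonneg hV (show (0:ℤ) ≤ 2*q-1 by linarith),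
      mul_nonneg (show (0:ℤ) ≤ 2*q-1 by linarith) (show (0:ℤ) ≤ 2*q-1-k by linarith)]
  have hUVle : U + V ≤ 2*q-1 := by
    by_contra h
    push_neg at h
    have h5 : (2*q)*(4*q^2+2*q) ≤ (U+V)*(4*q^2+2*q) :=
      mul_le_mul_of_nonneg_right (by linarith) (by nlinarith)
    nlinarith
  have hUV : U + V = 0 ∨ U + V = 2*q-1 := by
    rcases eq_or_lt_of_le (show (0:ℤ) ≤ U+V by linarith) with h | h
    · exact Or.inl h.symm
    · exact Or.inr (le_antisymm hUVle (Int.le_of_dvd h hdvd))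
  rcases hUV with hUV | hUV
  · have hU0 : U = 0 := by linarith
    have hV0 : V = 0 := by linarith
    subst hU0 hV0
    have hE2 : 2*q*X + (2*q+1)*Y = 4*q^2+2*q+k := by
      have h6 : (2*q-1)*(2*q*X + (2*q+1)*Y) = (2*q-1)*(4*q^2+2*q+k) := by
        linear_combination hE
      exact mul_left_cancel₀ (by linarith) h6
    have hYub : Y ≤ 2*q := by
      by_contra h
      push_neg at h
      nlinarith [mul_nonneg hX (show (0:ℤ) ≤ 2*q by linarith)]
    obtain ⟨c, hc⟩ : (2*q) ∣ (Y - k) := ⟨2*q+1-X-Y, by linear_combination hE2⟩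
    have hc0 : c = 0 := by
      rcases lt_trichotomy c 0 with h | h | h
      · nlinarith [mul_le_mul_of_nonneg_left (show c ≤ -1 by linarith) (show (0:ℤ) ≤ 2*q by linarith)]
      · exact h
      · nlinarith [mul_le_mul_of_nonneg_left (show 1 ≤ c by linarith) (show (0:ℤ) ≤ 2*q by linarith)]
    have hYk : Y = k := by rw [hc0, mul_zero] at hc; linarith
    right
    refine ⟨?_, hYk, rfl, rfl⟩
    have h7 : 2*q*X = 2*q*(2*q+1-k) := by linear_combination hE2 - (2*q+1)*hYk
    exact mul_left_cancel₀ (by linarith) h7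
  · have h3 : X*(4*q^2-2*q) + Y*(4*q^2-1) + V*(2*q-1) = (2*q-1)*k := by
      linear_combination hE - (4*q^2+2*q)*hUV
    have hbk : (2*q-1)*k ≤ (2*q-1)*(2*q-1) :=
      mul_le_mul_of_nonneg_left hk2 (by linarith)
    have hX0 : X = 0 := by
      by_contra h
      have h8 : 1 ≤ X := by omega
      nlinarith [mul_le_mul_of_nonneg_right h8 (show (0:ℤ) ≤ 4*q^2-2*q by nlinarith),
        mul_nonneg hY (show (0:ℤ) ≤ 4*q^2-1 by nlinarith),
        mul_nonneg hV (show (0:ℤ) ≤ 2*q-1 by linarith)]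
    have hY0 : Y = 0 := by
      by_contra h
      have h8 : 1 ≤ Y := by omega
      nlinarith [mul_le_mul_of_nonneg_right h8 (show (0:ℤ) ≤ 4*q^2-1 by nlinarith),
        mul_nonneg hX (show (0:ℤ) ≤ 4*q^2-2*q by nlinarith),
        mul_nonneg hV (show (0:ℤ) ≤ 2*q-1 by linarith)]
    have hVk : V = k := by
      have h9 : (2*q-1)*V = (2*q-1)*k := by linear_combination h3 - (4*q^2-2*q)*hX0 - (4*q^2-1)*hY0
      exact mul_left_cancel₀ (by linarith) h9
    exact Or.inl ⟨hX0, hY0, by linarith, hVk⟩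

def Av (q k : ℕ) : Fin 4 → ℕ := if k = 0 then ![0,1,1,0] else ![0,0,2*q-1-k,k]
def Bv (q k : ℕ) : Fin 4 → ℕ := if k = 0 then ![1,0,0,1] else ![2*q+1-k,k,0,0]
def Dg (q k : ℕ) : ℕ := if k = 0 then 8*q^2+2*q-1 else (2*q-1)*(4*q^2+2*q+k)

lemma piAv (q k : ℕ) (hq : 2 ≤ q) (hk : k < 2*q) :
    (Av q k) 0 * (4*q^2-2*q) + (Av q k) 1 * (4*q^2-1) + (Av q k) 2 * (4*q^2+2*q)
      + (Av q k) 3 * (4*q^2+4*q-1) = Dg q k := by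
  rcases Nat.eq_zero_or_pos k with h | h
  · subst h
    simp only [Av, Dg, if_pos rfl]
    simp
    zify [show 2*q ≤ 4*q^2 by nlinarith, show 1 ≤ 4*q^2 by nlinarith,
      show 1 ≤ 4*q^2+4*q by nlinarith, show 1 ≤ 8*q^2+2*q by nlinarith,
      show q*2 ≤ 4*q^2 by nlinarith, show 1 ≤ 8*q^2+q*2 by nlinarith,
      show 1 ≤ q*2 by omega, show 1 ≤ 2*q by omega]
    ring
  · have hk0 : k ≠ 0 := by omega
    simp only [Av, Dg, if_neg hk0]
    simp
    zify [show 2*q ≤ 4*q^2 by nlinarith, show 1 ≤ 4*q^2 by nlinarith,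
      show 1 ≤ 4*q^2+4*q by nlinarith, show q*2 ≤ 4*q^2 by nlinarith,
      show 1 ≤ q*2 by omega, show 1 ≤ 2*q by omega,
      show k ≤ 2*q-1 by omega, show k ≤ q*2-1 by omega]
    ring

lemma piBv (q k : ℕ) (hq : 2 ≤ q) (hk : k < 2*q) :
    (Bv q k) 0 * (4*q^2-2*q) + (Bv q k) 1 * (4*q^2-1) + (Bv q k) 2 * (4*q^2+2*q)
      + (Bv q k) 3 * (4*q^2+4*q-1) = Dg q k := by
  rcases Nat.eq_zero_or_pos k with h | h
  · subst h
    simp only [Bv, Dg, if_pos rfl]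
    simp
    zify [show 2*q ≤ 4*q^2 by nlinarith, show 1 ≤ 4*q^2 by nlinarith,
      show 1 ≤ 4*q^2+4*q by nlinarith, show 1 ≤ 8*q^2+2*q by nlinarith,
      show q*2 ≤ 4*q^2 by nlinarith, show 1 ≤ 8*q^2+q*2 by nlinarith,
      show 1 ≤ q*2 by omega, show 1 ≤ 2*q by omega]
    ring
  · have hk0 : k ≠ 0 := by omega
    simp only [Bv, Dg, if_neg hk0]
    simp
    zify [show 2*q ≤ 4*q^2 by nlinarith, show 1 ≤ 4*q^2 by nlinarith,
      show 1 ≤ 4*q^2+4*q by nlinarith, show q*2 ≤ 4*q^2 by nlinarith,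
      show 1 ≤ q*2 by omega, show 1 ≤ 2*q by omega,
      show k ≤ 2*q+1 by omega, show k ≤ q*2+1 by omega]
    ring

lemma huniq (q k : ℕ) (hq : 2 ≤ q) (hk : k < 2*q) (z : Fin 4 → ℕ)
    (hz : z 0 * (4*q^2-2*q) + z 1 * (4*q^2-1) + z 2 * (4*q^2+2*q) + z 3 * (4*q^2+4*q-1)
      = Dg q k) :
    z = Av q k ∨ z = Bv q k := by
  have hzZ : (z 0 : ℤ)*(4*(q:ℤ)^2-2*q) + (z 1 : ℤ)*(4*(q:ℤ)^2-1) + (z 2 : ℤ)*(4*(q:ℤ)^2+2*q)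
      + (z 3 : ℤ)*(4*(q:ℤ)^2+4*q-1) = ((Dg q k : ℕ) : ℤ) := by
    rw [← hz]
    push_cast [show 2*q ≤ 4*q^2 by nlinarith, show 1 ≤ 4*q^2 by nlinarith,
      show 1 ≤ 4*q^2+4*q by nlinarith]
    ring
  rcases Nat.eq_zero_or_pos k with h | h
  · subst h
    have hD : ((Dg q 0 : ℕ) : ℤ) = 8*(q:ℤ)^2+2*q-1 := by
      simp only [Dg, if_pos rfl]
      push_cast [show 1 ≤ 8*q^2+2*q by nlinarith]
      ring
    rw [hD] at hzZ
    rcases uniq0' q _ _ _ _ (by exact_mod_cast hq) (Int.natCast_nonneg _) (Int.natCast_nonneg _)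
      (Int.natCast_nonneg _) (Int.natCast_nonneg _) hzZ with ⟨h1, h2, h3, h4⟩ | ⟨h1, h2, h3, h4⟩
    · left; funext i; fin_cases i <;> simp [Av] <;> omega
    · right; funext i; fin_cases i <;> simp [Bv] <;> omega
  · have hk0 : k ≠ 0 := by omega
    have hD : ((Dg q k : ℕ) : ℤ) = (2*(q:ℤ)-1)*(4*(q:ℤ)^2+2*q+k) := by
      simp only [Dg, if_neg hk0]
      push_cast [show 1 ≤ 2*q by omega]
      ring
    rw [hD] at hzZ
    rcases uniqk' q k _ _ _ _ (by exact_mod_cast hq) (by exact_mod_cast h)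
      (by push_cast; omega)
      (Int.natCast_nonneg _) (Int.natCast_nonneg _) (Int.natCast_nonneg _)
      (Int.natCast_nonneg _) hzZ with ⟨h1, h2, h3, h4⟩ | ⟨h1, h2, h3, h4⟩
    · left; funext i; fin_cases i <;> simp [Av, hk0] <;> omega
    · right; funext i; fin_cases i <;> simp [Bv, hk0] <;> omega

lemma AvBv_ne (q k : ℕ) (hq : 2 ≤ q) (hk : k < 2*q) : Av q k ≠ Bv q k := by
  rcases Nat.eq_zero_or_pos k with h | h
  · subst h
    intro hcon
    have := congrFun hcon 0
    simp [Av, Bv] at this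
  · have hk0 : k ≠ 0 := by omega
    intro hcon
    have := congrFun hcon 3
    simp [Av, Bv, hk0] at this

lemma AvBv_disj (q k : ℕ) : ∀ i, Av q k i = 0 ∨ Bv q k i = 0 := by
  intro i
  rcases Nat.eq_zero_or_pos k with h | h
  · subst h
    fin_cases i <;> simp [Av, Bv]
  · have hk0 : k ≠ 0 := by omega
    fin_cases i <;> simp [Av, Bv, hk0]

lemma Dg_inj (q : ℕ) (hq : 2 ≤ q) {k k' : ℕ} (hk : k < 2*q) (hk' : k' < 2*q)
    (h : Dg q k = Dg q k') : k = k' := by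
  have hqq : 2*q ≤ q^2 := by nlinarith
  rcases Nat.eq_zero_or_pos k with h0 | h0 <;> rcases Nat.eq_zero_or_pos k' with h0' | h0'
  · omega
  · exfalso
    subst h0
    rw [Dg, Dg, if_pos rfl, if_neg (by omega : k' ≠ 0)] at h
    have h1 : 3*(4*q^2) ≤ (2*q-1)*(4*q^2+2*q+k') :=
      Nat.mul_le_mul (by omega) (le_trans (Nat.le_add_right _ _) (Nat.le_add_right _ _))
    rw [← h] at h1
    generalize hgen : q^2 = s at h1 hqq
    omega
  · exfalso
    subst h0'
    rw [Dg, Dg, if_pos rfl, if_neg (by omega : k ≠ 0)] at h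
    have h1 : 3*(4*q^2) ≤ (2*q-1)*(4*q^2+2*q+k) :=
      Nat.mul_le_mul (by omega) (le_trans (Nat.le_add_right _ _) (Nat.le_add_right _ _))
    rw [h] at h1
    generalize hgen : q^2 = s at h1 hqq
    omega
  · rw [Dg, Dg, if_neg (by omega : k ≠ 0), if_neg (by omega : k' ≠ 0)] at h
    have h2 := Nat.eq_of_mul_eq_mul_left (show 0 < 2*q-1 by omega) h
    exact Nat.add_left_cancel h2

/-- The Bresinsky-type generators
`a₁(n) = 4n^d − 2n^{d/2}`, `a₂(n) = 4n^d − 1`,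
`a₃(n) = 4n^d + 2n^{d/2}`, `a₄(n) = 4n^d + 4n^{d/2} − 1`. -/
def aa (d n : ℕ) : Fin 4 → ℕ :=
  ![4 * n ^ d - 2 * n ^ (d / 2), 4 * n ^ d - 1,
    4 * n ^ d + 2 * n ^ (d / 2), 4 * n ^ d + 4 * n ^ (d / 2) - 1]

theorem stmt14 (d : ℕ) (hd : Even d) (hd2 : 2 ≤ d) (n : ℕ) (hn : 1 ≤ n)
    (R : Finset ((Fin 4 → ℕ) × (Fin 4 → ℕ)))
    (hR : ∀ z z' : Fin 4 → ℕ,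
      addConGen (fun x y => (x, y) ∈ R) z z' ↔
        (∑ i, z i * aa d n i) = ∑ i, z' i * aa d n i) :
    2 * n ^ (d / 2) ≤ R.card := by
  classical
  set q := n ^ (d / 2) with hqdef
  have hnd : n ^ d = q ^ 2 := by
    rw [hqdef, ← pow_mul, Nat.div_mul_cancel hd.two_dvd]
  have hπ : ∀ z : Fin 4 → ℕ, (∑ i, z i * aa d n i)
      = z 0 * (4*q^2-2*q) + z 1 * (4*q^2-1) + z 2 * (4*q^2+2*q) + z 3 * (4*q^2+4*q-1) := by
    intro z
    rw [Fin.sum_univ_four]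
    simp only [aa, Matrix.cons_val_zero, Matrix.cons_val_one, Matrix.head_cons,
      Matrix.cons_val_two, Matrix.tail_cons, Matrix.cons_val_three]
    rw [hnd, ← hqdef]
  have hπadd : ∀ x y : Fin 4 → ℕ, (∑ i, (x + y) i * aa d n i)
      = (∑ i, x i * aa d n i) + ∑ i, y i * aa d n i := by
    intro x y
    rw [← Finset.sum_add_distrib]
    exact Finset.sum_congr rfl fun i _ => by simp [add_mul]
  have hker : ∀ p ∈ R, (∑ i, p.1 i * aa d n i) = ∑ i, p.2 i * aa d n i := by
    intro p hp
    exact (hR p.1 p.2).mp (AddConGen.Rel.of _ _ (by simpa using hp))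
  rcases eq_or_lt_of_le hn with h1 | h2
  · -- n = 1, q = 1
    have hq1 : q = 1 := by rw [hqdef, ← h1, one_pow]
    rw [hq1]
    have hπ1 : ∀ z : Fin 4 → ℕ, (∑ i, z i * aa d n i)
        = z 0 * 2 + z 1 * 3 + z 2 * 6 + z 3 * 7 := by
      intro z
      rw [hπ, hq1]
      norm_num
    -- forced pair: ![2,1,0,0] ~ ![0,0,0,1]
    have hchain := addConGen_chain ((hR ![2,1,0,0] ![0,0,0,1]).mpr
      (by rw [hπ1, hπ1]; simp))
    have hp := key_pair (π := fun z => ∑ i, z i * aa d n i) hπadd hker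
      (show (![2,1,0,0] : Fin 4 → ℕ) ≠ ![0,0,0,1] by
        intro hcon; have := congrFun hcon 0; simp at this)
      (by intro i; fin_cases i <;> simp)
      (by
        intro z hz
        rw [hπ1, hπ1] at hz
        simp at hz
        have : (z 0 = 2 ∧ z 1 = 1 ∧ z 2 = 0 ∧ z 3 = 0)
            ∨ (z 0 = 0 ∧ z 1 = 0 ∧ z 2 = 0 ∧ z 3 = 1) := by omega
        rcases this with ⟨e0, e1, e2, e3⟩ | ⟨e0, e1, e2, e3⟩
        · left; funext i; fin_cases i <;> simpa
        · right; funext i; fin_cases i <;> simpa)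
      hchain
    by_contra hcard
    push_neg at hcard
    have hle1 : R.card ≤ 1 := by omega
    have hsub := Finset.card_le_one.mp hle1
    -- second chain: ![0,2,0,0] ~ ![0,0,1,0], invariant: third coordinate
    have hchain2 := addConGen_chain ((hR ![0,2,0,0] ![0,0,1,0]).mpr
      (by rw [hπ1, hπ1]; simp))
    have hinv : ∀ x y : Fin 4 → ℕ,
        ReflTransGen (BStep (fun x y => (x, y) ∈ R)) x y → x 2 = y 2 := by
      intro x y h
      induction h with
      | refl => rfl
      | @tail b c h1 hstep ih =>
        obtain ⟨u, s, t, hst, he1, he2⟩ := hstep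
        have hst2 : s 2 = 0 ∧ t 2 = 0 := by
          rcases hp with hmem | hmem <;> rcases hst with hh | hh <;>
          · have := hsub _ hh _ hmem
            rw [Prod.mk.injEq] at this
            obtain ⟨e1, e2⟩ := this
            constructor <;> simp [e1, e2]
        have e1 : b 2 = u 2 + s 2 := by rw [he1]; rfl
        have e2 : c 2 = u 2 + t 2 := by rw [he2]; rfl
        omega
    have := hinv _ _ hchain2
    simp at this
  · -- n ≥ 2, q ≥ 2
    have hq2 : 2 ≤ q := le_trans h2 (Nat.le_self_pow (by omega) n)
    have hex : ∀ k ∈ Finset.range (2*q),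
        ∃ p, p ∈ R ∧ (∑ i, p.1 i * aa d n i) = Dg q k := by
      intro k hk
      rw [Finset.mem_range] at hk
      have hA := piAv q k hq2 hk
      have hB := piBv q k hq2 hk
      have hchain := addConGen_chain ((hR (Av q k) (Bv q k)).mpr
        (by rw [hπ, hπ, hA, hB]))
      have hpair := key_pair (π := fun z => ∑ i, z i * aa d n i) hπadd hker
        (AvBv_ne q k hq2 hk) (AvBv_disj q k)
        (by
          intro z hz
          rw [hπ, hπ, hA] at hz
          exact huniq q k hq2 hk z hz)
        hchain
      rcases hpair with h | h
      · exact ⟨(Av q k, Bv q k), h, by rw [hπ]; exact hA⟩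
      · exact ⟨(Bv q k, Av q k), h, by rw [hπ]; exact hB⟩
    set g : ℕ → ((Fin 4 → ℕ) × (Fin 4 → ℕ)) := fun k =>
      if h : ∃ p, p ∈ R ∧ (∑ i, p.1 i * aa d n i) = Dg q k then h.choose
      else (Av q 0, Bv q 0) with hgdef
    have hg : ∀ k ∈ Finset.range (2*q),
        g k ∈ R ∧ (∑ i, (g k).1 i * aa d n i) = Dg q k := by
      intro k hk
      have hh := hex k hk
      rw [hgdef]
      simp only [dif_pos hh]
      exact hh.choose_spec
    calc 2*q = (Finset.range (2*q)).card := (Finset.card_range _).symm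
      _ ≤ R.card := Finset.card_le_card_of_injOn g (fun k hk => (hg k hk).1)
        (by
          intro k hk k' hk' he
          simp only [Finset.coe_range, Set.mem_Iio] at hk hk'
          refine Dg_inj q hq2 hk hk' ?_
          rw [← (hg k (Finset.mem_range.mpr hk)).2, ← (hg k' (Finset.mem_range.mpr hk')).2, he])
end

section
/- Fix an even integer d ≥ 2 and set a_1(n) = 4n^d − 2n^{d/2}, a_2(n) = 4n^d − 1, a_3(n) = 4n^d + 2n^{d/2}, a_4(n) = 4n^d + 4n^{d/2} − 1. For n ≥ 1 and an integer μ with 1 ≤ μ ≤ 2n^{d/2}, let f(μ) = (μ + 1)·a_1(n) + (2n^{d/2} − μ)·a_2(n). Then for every r ∈ {1, 2} and s ∈ {3, 4}, the integer f(μ) − a_r(n) − a_s(n) does not belong to S_n, the additive submonoid of ℕ generated by a_1(n), a_2(n), a_3(n), a_4(n); that is, there is no (z_1, z_2, z_3, z_4) ∈ ℕ^4 with Σ_i z_i·a_i(n) + a_r(n) + a_s(n) = f(μ). -/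
lemma key16 (m μ c1 c2 c3 c4 : ℤ) (hm : 1 ≤ m) (hμ1 : 1 ≤ μ) (hμ2 : μ ≤ 2*m)
    (h1 : 0 ≤ c1) (h2 : 0 ≤ c2) (h3 : 0 ≤ c3) (h4 : 0 ≤ c4)
    (hc12 : 1 ≤ c1 + c2) (hc34 : 1 ≤ c3 + c4)
    (heq : c1*(4*m^2-2*m) + c2*(4*m^2-1) + c3*(4*m^2+2*m) + c4*(4*m^2+4*m-1)
      = (μ+1)*(4*m^2-2*m) + (2*m-μ)*(4*m^2-1)) : False := by
  have hco : IsCoprime ((2*m-1):ℤ) 2 := ⟨-1, m, by ring⟩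
  have hkey : (c3+c4) * 2 = (2*m-1) * (2*m*(μ+1) + (2*m+1)*(2*m-μ)
      - (2*m*c1 + (2*m+1)*c2 + (2*m+2)*c3 + (2*m+3)*c4)) := by
    linear_combination heq
  have hdvd : (2*m-1) ∣ (c3+c4) := hco.dvd_of_dvd_mul_right ⟨_, hkey⟩
  have hle : 2*m-1 ≤ c3+c4 := Int.le_of_dvd (by linarith) hdvd
  nlinarith [mul_nonneg h2 (by linarith : (0:ℤ) ≤ 2*m-1),
    mul_nonneg h4 (by linarith : (0:ℤ) ≤ 2*m-1),
    mul_nonneg (by linarith : (0:ℤ) ≤ c3+c4-(2*m-1)) (by nlinarith : (0:ℤ) ≤ 4*m^2+2*m),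
    mul_nonneg (by linarith : (0:ℤ) ≤ c1+c2-1) (by nlinarith : (0:ℤ) ≤ 4*m^2-2*m),
    mul_nonneg (by linarith : (0:ℤ) ≤ μ-1) (by linarith : (0:ℤ) ≤ 2*m-1)]

theorem stmt16 (d : ℕ) (hd : Even d) (hd2 : 2 ≤ d) (n : ℕ) (hn : 1 ≤ n)
    (μ : ℕ) (hμ1 : 1 ≤ μ) (hμ2 : μ ≤ 2 * n ^ (d / 2))
    (r s : Fin 4) (hr : r = 0 ∨ r = 1) (hs : s = 2 ∨ s = 3) :
    ¬ ∃ z : Fin 4 → ℕ,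
      (∑ i, z i * aa d n i) + aa d n r + aa d n s
        = (μ + 1) * aa d n 0 + (2 * n ^ (d / 2) - μ) * aa d n 1 := by
  rintro ⟨z, hz⟩
  obtain ⟨k, hk⟩ := hd
  set m := n ^ (d / 2) with hmdef
  have hm1 : 1 ≤ m := Nat.one_le_pow _ _ hn
  have hpow : n ^ d = m ^ 2 := by
    rw [hmdef, ← pow_mul]
    congr 1
    omega
  have hb1 : 2 * m ≤ 4 * m ^ 2 := by nlinarith
  have hb2 : 1 ≤ 4 * m ^ 2 := by nlinarith
  have hb3 : 1 ≤ 4 * m ^ 2 + 4 * m := by nlinarith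
  rcases hr with rfl | rfl <;> rcases hs with rfl | rfl <;>
    simp only [aa, hpow, Fin.sum_univ_four, Matrix.cons_val_zero, Matrix.cons_val_one,
      Matrix.head_cons, Matrix.cons_val_two, Matrix.tail_cons, Matrix.cons_val_three] at hz <;>
    zify [hb1, hb2, hb3, hμ2, (by rw [← hmdef]; exact hb1 : 2 * n ^ (d / 2) ≤ 4 * m ^ 2),
      (by rw [← hmdef]; exact hb3 : 1 ≤ 4 * m ^ 2 + 4 * n ^ (d / 2))] at hz <;>
    rw [show ((n:ℤ)) ^ (d / 2) = (m:ℤ) from by rw [hmdef]; push_cast; ring] at hz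
  · exact key16 m μ (z 0 + 1) (z 1) (z 2 + 1) (z 3) (by exact_mod_cast hm1)
      (by exact_mod_cast hμ1) (by exact_mod_cast hμ2) (by positivity) (by positivity)
      (by positivity) (by positivity) (by linarith [Int.ofNat_nonneg (z 1)])
      (by linarith [Int.ofNat_nonneg (z 3)]) (by linear_combination hz)
  · exact key16 m μ (z 0 + 1) (z 1) (z 2) (z 3 + 1) (by exact_mod_cast hm1)
      (by exact_mod_cast hμ1) (by exact_mod_cast hμ2) (by positivity) (by positivity)
      (by positivity) (by positivity) (by linarith [Int.ofNat_nonneg (z 1)])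
      (by linarith [Int.ofNat_nonneg (z 2)]) (by linear_combination hz)
  · exact key16 m μ (z 0) (z 1 + 1) (z 2 + 1) (z 3) (by exact_mod_cast hm1)
      (by exact_mod_cast hμ1) (by exact_mod_cast hμ2) (by positivity) (by positivity)
      (by positivity) (by positivity) (by linarith [Int.ofNat_nonneg (z 0)])
      (by linarith [Int.ofNat_nonneg (z 3)]) (by linear_combination hz)
  · exact key16 m μ (z 0) (z 1 + 1) (z 2) (z 3 + 1) (by exact_mod_cast hm1)
      (by exact_mod_cast hμ1) (by exact_mod_cast hμ2) (by positivity) (by positivity)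
      (by positivity) (by positivity) (by linarith [Int.ofNat_nonneg (z 0)])
      (by linarith [Int.ofNat_nonneg (z 2)]) (by linear_combination hz)
end

section
/- Fix an even integer d ≥ 2 and set a_1(n) = 4n^d − 2n^{d/2}, a_2(n) = 4n^d − 1, a_3(n) = 4n^d + 2n^{d/2}, a_4(n) = 4n^d + 4n^{d/2} − 1. For n ≥ 1 and an integer μ with 1 ≤ μ ≤ 2n^{d/2}, let f(μ) = (μ + 1)·a_1(n) + (2n^{d/2} − μ)·a_2(n). Then: (i) f(μ) = (μ − 1)·a_3(n) + (2n^{d/2} − μ)·a_4(n); and (ii) every (z_1, z_2, z_3, z_4) ∈ ℕ^4 with z_1·a_1(n) + z_2·a_2(n) + z_3·a_3(n) + z_4·a_4(n) = f(μ) satisfies either z_1 = z_2 = 0 or z_3 = z_4 = 0. -/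
def bresGen (M : ℤ) : Fin 4 → ℤ :=
  ![4 * M ^ 2 - 2 * M, 4 * M ^ 2 - 1, 4 * M ^ 2 + 2 * M, 4 * M ^ 2 + 4 * M - 1]

theorem cast_aa {d : ℕ} (hd : Even d) {n : ℕ} (hn : 1 ≤ n) (i : Fin 4) :
    (aa d n i : ℤ) = bresGen (n ^ (d / 2) : ℕ) i := by
  have hpow : n ^ d = (n ^ (d / 2)) ^ 2 := by
    rw [← pow_mul, Nat.div_mul_cancel hd.two_dvd]
  have hM : 1 ≤ n ^ (d / 2) := Nat.one_le_pow _ _ hn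
  have h₁ : 2 * n ^ (d / 2) ≤ 4 * (n ^ (d / 2)) ^ 2 := by nlinarith
  have h₂ : 1 ≤ 4 * (n ^ (d / 2)) ^ 2 := by nlinarith
  have h₃ : 1 ≤ 4 * (n ^ (d / 2)) ^ 2 + 4 * n ^ (d / 2) := by nlinarith
  fin_cases i <;> simp [aa, bresGen, hpow, h₁, h₂, h₃]

theorem sum_mul_bresGen (M : ℤ) (x : Fin 4 → ℤ) :
    ∑ i, x i * bresGen M i =
      (2 * M - 1) * (2 * M * x 0 + (2 * M + 1) * x 1 + x 3) +
        2 * M * (2 * M + 1) * (x 2 + x 3) := by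
  simp only [bresGen, Fin.sum_univ_four, Matrix.cons_val_zero, Matrix.cons_val_one,
    Matrix.cons_val]
  ring

theorem first_factorization_eq_second (M μ : ℤ) :
    (μ + 1) * bresGen M 0 + (2 * M - μ) * bresGen M 1 =
      (μ - 1) * bresGen M 2 + (2 * M - μ) * bresGen M 3 := by
  simp only [bresGen, Matrix.cons_val_zero, Matrix.cons_val_one, Matrix.cons_val]
  ring

theorem first_factorization_eq (M μ : ℤ) :
    (μ + 1) * bresGen M 0 + (2 * M - μ) * bresGen M 1 =
      (2 * M - 1) * (2 * M - μ) + 2 * M * (2 * M + 1) * (2 * M - 1) := by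
  simp only [bresGen, Matrix.cons_val_zero, Matrix.cons_val_one]
  ring

theorem isCoprime_two_mul_sub_one {R : Type*} [CommRing R] (M : R) :
    IsCoprime (2 * M - 1) (2 * M * (2 * M + 1)) :=
  ⟨-(2 * M ^ 2 + 2 * M + 1), M, by ring⟩

theorem eq_zero_or_eq_zero_of_sum_mul_bresGen_eq {M μ : ℤ} (hM : 1 ≤ M) (hμ : 1 ≤ μ)
    (x : Fin 4 → ℤ) (hx : ∀ i, 0 ≤ x i)
    (hE : ∑ i, x i * bresGen M i = (μ + 1) * bresGen M 0 + (2 * M - μ) * bresGen M 1) :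
    (x 0 = 0 ∧ x 1 = 0) ∨ (x 2 = 0 ∧ x 3 = 0) := by
  by_contra! h
  have ht : 1 ≤ x 0 + x 1 := by have := hx 0; have := hx 1; omega
  have hs : 1 ≤ x 2 + x 3 := by have := hx 2; have := hx 3; omega
  have hsplit : (2 * M - 1) * (2 * M * x 0 + (2 * M + 1) * x 1 + x 3 - (2 * M - μ)) =
      2 * M * (2 * M + 1) * (2 * M - 1 - (x 2 + x 3)) := by
    rw [sum_mul_bresGen, first_factorization_eq] at hE
    linear_combination hE
  have hpos : 0 < 2 * M - 1 - (x 2 + x 3) := by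
    have hw : 0 < 2 * M * x 0 + (2 * M + 1) * x 1 + x 3 - (2 * M - μ) := by
      nlinarith [hx 1, hx 3]
    have : 0 < 2 * M * (2 * M + 1) * (2 * M - 1 - (x 2 + x 3)) := by
      rw [← hsplit]; exact mul_pos (by omega) hw
    exact pos_of_mul_pos_right this (by positivity)
  have hdvd : 2 * M - 1 ∣ 2 * M - 1 - (x 2 + x 3) :=
    (isCoprime_two_mul_sub_one M).dvd_of_dvd_mul_left (Dvd.intro _ hsplit)
  linarith [Int.le_of_dvd hpos hdvd]

theorem stmt17_general (d : ℕ) (hd : Even d) (n : ℕ) (hn : 1 ≤ n)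
    (μ : ℕ) (hμ1 : 1 ≤ μ) (hμ2 : μ ≤ 2 * n ^ (d / 2)) :
    ((μ + 1) * aa d n 0 + (2 * n ^ (d / 2) - μ) * aa d n 1
        = (μ - 1) * aa d n 2 + (2 * n ^ (d / 2) - μ) * aa d n 3) ∧
      ∀ z : Fin 4 → ℕ,
        (∑ i, z i * aa d n i)
            = (μ + 1) * aa d n 0 + (2 * n ^ (d / 2) - μ) * aa d n 1 →
          (z 0 = 0 ∧ z 1 = 0) ∨ (z 2 = 0 ∧ z 3 = 0) := by
  have hM : (1 : ℤ) ≤ (n ^ (d / 2) : ℕ) := by exact_mod_cast Nat.one_le_pow _ _ hn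
  refine ⟨?_, fun z hz => ?_⟩
  · zify
    push_cast [Nat.cast_sub hμ1, Nat.cast_sub hμ2, cast_aa hd hn]
    exact first_factorization_eq_second _ _
  · zify at hz
    push_cast [Nat.cast_sub hμ2, cast_aa hd hn] at hz
    exact_mod_cast eq_zero_or_eq_zero_of_sum_mul_bresGen_eq hM (μ := μ) (by exact_mod_cast hμ1)
      (fun i => (z i : ℤ)) (fun i => by positivity) hz

theorem stmt17 (d : ℕ) (hd : Even d) (hd2 : 2 ≤ d) (n : ℕ) (hn : 1 ≤ n)
    (μ : ℕ) (hμ1 : 1 ≤ μ) (hμ2 : μ ≤ 2 * n ^ (d / 2)) :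
    ((μ + 1) * aa d n 0 + (2 * n ^ (d / 2) - μ) * aa d n 1
        = (μ - 1) * aa d n 2 + (2 * n ^ (d / 2) - μ) * aa d n 3) ∧
      ∀ z : Fin 4 → ℕ,
        (∑ i, z i * aa d n i)
            = (μ + 1) * aa d n 0 + (2 * n ^ (d / 2) - μ) * aa d n 1 →
          (z 0 = 0 ∧ z 1 = 0) ∨ (z 2 = 0 ∧ z 3 = 0) :=
  stmt17_general d hd n hn μ hμ1 hμ2
end

section
/- Let f_1, …, f_k : ℕ → ℕ be functions given by polynomials with integer coefficients, and for each n let S_n ⊆ ℕ be the additive submonoid generated by f_1(n), …, f_k(n). Then there is an eventually quasi-polynomial function g : ℕ → ℤ such that for every n with S_n ≠ {0}, the smallest positive element of S_n (the multiplicity of S_n) equals g(n). -/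
open Polynomial Filter

/-- Sign of a nonzero rational polynomial is eventually constant on ℕ. -/
lemma sign_ev (d : ℚ[X]) (hd : d ≠ 0) :
    (∃ N : ℕ, ∀ n : ℕ, N ≤ n → 0 < d.eval (n : ℚ)) ∨
    (∃ N : ℕ, ∀ n : ℕ, N ≤ n → d.eval (n : ℚ) < 0) := by
  rcases le_or_gt d.degree 0 with h | h
  · have hc : d.coeff 0 ≠ 0 := by
      intro h0
      exact hd (by rw [Polynomial.eq_C_of_degree_le_zero h, h0, map_zero])
    have he : ∀ x : ℚ, d.eval x = d.coeff 0 := by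
      intro x
      conv_lhs => rw [Polynomial.eq_C_of_degree_le_zero h]
      simp
    rcases hc.lt_or_gt with h1 | h1
    · right; exact ⟨0, fun n _ => by rw [he]; exact h1⟩
    · left; exact ⟨0, fun n _ => by rw [he]; exact h1⟩
  · rcases le_or_gt 0 d.leadingCoeff with h1 | h1
    · left
      have := (d.tendsto_atTop_of_leadingCoeff_nonneg h h1).eventually_ge_atTop 1
      rw [eventually_atTop] at this
      obtain ⟨M, hM⟩ := this
      obtain ⟨N, hN⟩ := exists_nat_ge M
      exact ⟨N, fun n hn => lt_of_lt_of_le one_pos (hM _ (hN.trans (by exact_mod_cast Nat.cast_le.mpr hn)))⟩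
    · right
      have := (d.tendsto_atBot_of_leadingCoeff_nonpos h h1.le).eventually_le_atBot (-1)
      rw [eventually_atTop] at this
      obtain ⟨M, hM⟩ := this
      obtain ⟨N, hN⟩ := exists_nat_ge M
      exact ⟨N, fun n hn => lt_of_le_of_lt (hM _ (hN.trans (by exact_mod_cast Nat.cast_le.mpr hn))) (by norm_num)⟩

/-- Two rational polynomials are eventually comparable on ℕ. -/
lemma ev_comparable (a b : ℚ[X]) :
    ∃ N : ℕ, (∀ n : ℕ, N ≤ n → a.eval (n : ℚ) ≤ b.eval (n : ℚ)) ∨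
             (∀ n : ℕ, N ≤ n → b.eval (n : ℚ) ≤ a.eval (n : ℚ)) := by
  by_cases hd : a - b = 0
  · exact ⟨0, Or.inl fun n _ => le_of_eq (by have := sub_eq_zero.mp hd; rw [this])⟩
  · rcases sign_ev (a - b) hd with ⟨N, hN⟩ | ⟨N, hN⟩
    · exact ⟨N, Or.inr fun n hn => by have := hN n hn; rw [Polynomial.eval_sub] at this; linarith⟩
    · exact ⟨N, Or.inl fun n hn => by have := hN n hn; rw [Polynomial.eval_sub] at this; linarith⟩

lemma exists_ev_min {k : ℕ} (q : Fin k → ℚ[X]) (I : Finset (Fin k)) (hI : I.Nonempty) :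
    ∃ j ∈ I, ∃ N : ℕ, ∀ n : ℕ, N ≤ n → ∀ i ∈ I, (q j).eval (n : ℚ) ≤ (q i).eval (n : ℚ) := by
  induction hI using Finset.Nonempty.cons_induction with
  | singleton a => exact ⟨a, by simp, 0, fun n _ i hi => by simp_all⟩
  | cons a s ha hs ih =>
      obtain ⟨j, hj, N, hN⟩ := ih
      obtain ⟨M, hM⟩ := ev_comparable (q a) (q j)
      rcases hM with hM | hM
      · refine ⟨a, Finset.mem_cons_self a s, max N M, fun n hn i hi => ?_⟩
        rcases Finset.mem_cons.mp hi with rfl | hi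
        · exact le_refl _
        · exact (hM n (le_of_max_le_right hn)).trans (hN n (le_of_max_le_left hn) i hi)
      · refine ⟨j, Finset.mem_cons.mpr (Or.inr hj), max N M, fun n hn i hi => ?_⟩
        rcases Finset.mem_cons.mp hi with rfl | hi
        · exact hM n (le_of_max_le_right hn)
        · exact hN n (le_of_max_le_left hn) i hi

/-- If `g` eventually agrees with a rational polynomial, it is EQP. -/
lemma isEQP_of_ev_poly (g : ℕ → ℤ) (q : ℚ[X]) (N : ℕ)
    (h : ∀ n : ℕ, N ≤ n → (g n : ℚ) = q.eval (n : ℚ)) : IsEQP g := by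
  set d := q.natDegree with hd
  set S : ℕ → ℚ := fun n => ∑ i ∈ Finset.range (d + 1), q.coeff i * (n : ℚ) ^ i with hS
  have hSe : ∀ n : ℕ, N ≤ n → (g n : ℚ) = S n := by
    intro n hn
    rw [h n hn, hS, q.eval_eq_sum_range]
  refine ⟨d, fun i n => if i = 0 then (g n : ℚ) - S n + q.coeff 0 else q.coeff i, ?_, ?_⟩
  · intro i _
    by_cases h0 : i = 0
    · subst h0
      refine ⟨N, 1, le_refl 1, fun n hn => ?_⟩
      simp only [if_pos rfl]
      rw [hSe n hn, hSe (n + 1) (by omega)]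
      ring
    · exact ⟨0, 1, le_refl 1, fun n _ => by simp only [if_neg h0]⟩
  · intro n
    rw [Finset.sum_range_succ']
    have hSn : S n = (∑ i ∈ Finset.range d, q.coeff (i + 1) * (n : ℚ) ^ (i + 1))
        + q.coeff 0 * (n : ℚ) ^ 0 := Finset.sum_range_succ' _ _
    simp only [Nat.succ_ne_zero, if_false, reduceIte, pow_zero, mul_one] at hSn ⊢
    linarith

theorem stmt18 (k : ℕ) (hk : 1 ≤ k) (f : Fin k → ℕ → ℕ)
    (hf : ∀ i, ∃ p : Polynomial ℤ, ∀ n : ℕ, (f i n : ℤ) = p.eval (n : ℤ)) :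
    ∃ g : ℕ → ℤ, IsEQP g ∧
      ∀ n : ℕ, SG k f n ≠ ⊥ →
        g n = ((sInf {x : ℕ | x ∈ SG k f n ∧ 0 < x} : ℕ) : ℤ) := by
  classical
  choose p hp using hf
  set q : Fin k → ℚ[X] := fun i => (p i).map (Int.castRingHom ℚ) with hq
  have hqe : ∀ i (n : ℕ), ((f i n : ℤ) : ℚ) = (q i).eval (n : ℚ) := by
    intro i n
    rw [hp i n, hq]
    simp only []
    rw [show ((n : ℕ) : ℚ) = (Int.castRingHom ℚ) ((n : ℕ) : ℤ) by simp,
      Polynomial.eval_map, Polynomial.eval₂_hom]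
    simp
  refine ⟨fun n => ((sInf {x : ℕ | x ∈ SG k f n ∧ 0 < x} : ℕ) : ℤ), ?_, fun n _ => rfl⟩
  by_cases hall : ∀ i, p i = 0
  · have hz : ∀ n, {x : ℕ | x ∈ SG k f n ∧ 0 < x} = ∅ := by
      intro n
      have hf0 : ∀ i, f i n = 0 := by
        intro i
        have := hp i n
        rw [hall i] at this
        simpa using this
      have hbot : SG k f n ≤ ⊥ := by
        rw [SG]
        apply AddSubmonoid.closure_le.mpr
        rintro x ⟨i, rfl⟩
        simp [hf0 i]
      ext x
      simp only [Set.mem_setOf_eq, Set.mem_empty_iff_false, iff_false]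
      rintro ⟨hx1, hx2⟩
      have := hbot hx1
      simp only [AddSubmonoid.mem_bot] at this
      omega
    apply isEQP_of_ev_poly _ 0 0
    intro n _
    simp [hz n, sInf_empty]
  · push_neg at hall
    set I : Finset (Fin k) := Finset.univ.filter (fun i => p i ≠ 0) with hI
    have hIne : I.Nonempty := by
      obtain ⟨i, hi⟩ := hall
      exact ⟨i, by simp [hI, hi]⟩
    obtain ⟨j, hjI, N₁, hN₁⟩ := exists_ev_min q I hIne
    have hqj : q j ≠ 0 := by
      simp only [hI, Finset.mem_filter] at hjI
      simpa [hq, Polynomial.map_eq_zero_iff (f := Int.castRingHom ℚ)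
        ((Int.cast_injective : Function.Injective ((↑) : ℤ → ℚ)))] using hjI.2
    have hN₂ : ∃ N₂ : ℕ, ∀ n : ℕ, N₂ ≤ n → 0 < (q j).eval (n : ℚ) := by
      rcases sign_ev (q j) hqj with h | ⟨N, hN⟩
      · exact h
      · exfalso
        have h1 := hN N (le_refl N)
        have h2 : (0 : ℚ) ≤ (q j).eval (N : ℚ) := by
          rw [← hqe]; positivity
        linarith
    obtain ⟨N₂, hN₂⟩ := hN₂
    apply isEQP_of_ev_poly _ (q j) (max N₁ N₂)
    intro n hn
    have hjpos : 0 < f j n := by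
      have := hN₂ n (le_of_max_le_right hn)
      rw [← hqe] at this
      exact_mod_cast this
    have hjmem : f j n ∈ {x : ℕ | x ∈ SG k f n ∧ 0 < x} :=
      ⟨AddSubmonoid.subset_closure ⟨j, rfl⟩, hjpos⟩
    have hlb : ∀ x ∈ {x : ℕ | x ∈ SG k f n ∧ 0 < x}, f j n ≤ x := by
      rintro x ⟨hx1, hx2⟩
      have key : x = 0 ∨ f j n ≤ x := by
        refine AddSubmonoid.closure_induction (motive := fun x _ => x = 0 ∨ f j n ≤ x)
          ?_ (Or.inl rfl) ?_ hx1
        · rintro y ⟨i, rfl⟩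
          by_cases hy : f i n = 0
          · exact Or.inl hy
          · right
            have hpi : p i ≠ 0 := by
              intro h0
              apply hy
              have := hp i n
              rw [h0] at this
              simpa using this
            have hiI : i ∈ I := by simp [hI, hpi]
            have := hN₁ n (le_of_max_le_left hn) i hiI
            rw [← hqe, ← hqe] at this
            exact_mod_cast this
        · rintro y z _ _ (rfl | hy) (rfl | hz)
          · exact Or.inl rfl
          · exact Or.inr (by omega)
          · exact Or.inr (by omega)
          · exact Or.inr (by omega)
      rcases key with rfl | h
      · omega
      · exact h
    have hinf : sInf {x : ℕ | x ∈ SG k f n ∧ 0 < x} = f j n :=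
      le_antisymm (Nat.sInf_le hjmem) (hlb _ (Nat.sInf_mem ⟨_, hjmem⟩))
    rw [hinf, ← hqe]
end
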